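/- arXiv:2108.01818 — 4 statements merged into one kernel-verified Lean document; each statement's English description precedes it below -/
import Mathlib

section
/- In cylindrical coordinates (r, φ, z) on ℝ³ minus the z-axis, define ψ = z/r − φ and let f be any smooth function of the two variables (r, ψ). Then the vector field B = f(r, ψ) ∇r × ∇ψ satisfies ∇·B = 0 and B·∇(|B|²) = 0, i.e. B is divergence-free and its field strength is constant along its own field lines (self-quasisymmetry). -/
open MeasureTheory

noncomputable section

/-- Vectors in ℝ³. -/
abbrev V3 := Fin 3 → ℝ

/-- Partial derivative ∂_i f at x. -/
noncomputable def pd (i : Fin 3) (f : V3 → ℝ) (x : V3) : ℝ :=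
  fderiv ℝ f x (Pi.single i 1)

/-- Gradient ∇f. -/
noncomputable def grad (f : V3 → ℝ) (x : V3) : V3 := fun i => pd i f x

/-- Divergence ∇·B. -/
noncomputable def div3 (B : V3 → V3) (x : V3) : ℝ := ∑ i, pd i (fun y => B y i) x

/-- Cross product in ℝ³. -/
def cross (a b : V3) : V3 :=
  ![a 1 * b 2 - a 2 * b 1, a 2 * b 0 - a 0 * b 2, a 0 * b 1 - a 1 * b 0]

/-- Dot product in ℝ³. -/
def dot (a b : V3) : ℝ := ∑ i, a i * b i

/-- Curl ∇×B. -/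
noncomputable def curl (B : V3 → V3) (x : V3) : V3 :=
  ![pd 1 (fun y => B y 2) x - pd 2 (fun y => B y 1) x,
    pd 2 (fun y => B y 0) x - pd 0 (fun y => B y 2) x,
    pd 0 (fun y => B y 1) x - pd 1 (fun y => B y 0) x]

/-- Cylindrical radius r = √(x²+y²). -/
noncomputable def rr (x : V3) : ℝ := Real.sqrt (x 0 ^ 2 + x 1 ^ 2)

noncomputable def LR (x : V3) : V3 →L[ℝ] ℝ :=
  (x 0 / rr x) • (ContinuousLinearMap.proj 0) + (x 1 / rr x) • (ContinuousLinearMap.proj 1)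

lemma LR_apply (x v : V3) : LR x v = (x 0 * v 0 + x 1 * v 1) / rr x := by
  simp [LR, ContinuousLinearMap.proj_apply]
  ring

lemma rr_sq (x : V3) : rr x ^ 2 = x 0 ^ 2 + x 1 ^ 2 := by
  rw [rr, Real.sq_sqrt]; positivity

lemma hasFDerivAt_rr (x : V3) (h : 0 < rr x) : HasFDerivAt rr (LR x) x := by
  have hne : x 0 ^ 2 + x 1 ^ 2 ≠ 0 := by
    have := rr_sq x; nlinarith
  have h0 := (ContinuousLinearMap.proj 0 (R := ℝ) (φ := fun _ : Fin 3 => ℝ)).hasFDerivAt (x := x)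
  have h1 := (ContinuousLinearMap.proj 1 (R := ℝ) (φ := fun _ : Fin 3 => ℝ)).hasFDerivAt (x := x)
  have hq : HasFDerivAt (fun y : V3 => y 0 ^ 2 + y 1 ^ 2)
      ((2 * x 0) • (ContinuousLinearMap.proj 0 : V3 →L[ℝ] ℝ) + (2 * x 1) • ContinuousLinearMap.proj 1) x := by
    have h2 := ((h0.mul h0).add (h1.mul h1)).congr_fderiv (g' :=
      (2 * x 0) • (ContinuousLinearMap.proj 0 : V3 →L[ℝ] ℝ) + (2 * x 1) • ContinuousLinearMap.proj 1)
      (by ext v; simp [ContinuousLinearMap.proj_apply]; ring)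
    have : (fun y : V3 => y 0 ^ 2 + y 1 ^ 2) = fun y : V3 => y 0 * y 0 + y 1 * y 1 := by
      ext y; ring
    rw [this]
    exact h2
  have hs := (Real.hasDerivAt_sqrt hne).comp_hasFDerivAt x hq
  have heq : rr = fun y : V3 => Real.sqrt (y 0 ^ 2 + y 1 ^ 2) := rfl
  rw [heq]
  refine hs.congr_fderiv ?_
  ext v
  have hrr : Real.sqrt (x 0 ^ 2 + x 1 ^ 2) = rr x := rfl
  simp [LR, ContinuousLinearMap.proj_apply, hrr]
  field_simp

lemma phi_deriv (U : Set V3) (hU : IsOpen U) (hax : ∀ x ∈ U, 0 < rr x)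
    (φ : V3 → ℝ) (hφ : ContDiffOn ℝ (⊤ : ℕ∞) φ U)
    (hbranch : ∀ x ∈ U, Real.cos (φ x) * rr x = x 0 ∧ Real.sin (φ x) * rr x = x 1)
    (x : V3) (hx : x ∈ U) :
    HasFDerivAt φ (fderiv ℝ φ x) x ∧
      ∀ v : V3, fderiv ℝ φ x v = (x 0 * v 1 - x 1 * v 0) / rr x ^ 2 := by
  have hs : 0 < rr x := hax x hx
  have hφd : DifferentiableAt ℝ φ x :=
    ((hφ.contDiffAt (hU.mem_nhds hx)).differentiableAt (by simp))
  have hD : HasFDerivAt φ (fderiv ℝ φ x) x := hφd.hasFDerivAt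
  refine ⟨hD, fun v => ?_⟩
  set D := fderiv ℝ φ x with hDdef
  set a := Real.cos (φ x)
  set b := Real.sin (φ x)
  -- derivative of cos(φ y) * rr y  vs  y 0
  have hcos : HasFDerivAt (fun y => Real.cos (φ y) * rr y)
      (Real.cos (φ x) • LR x + rr x • ((-Real.sin (φ x)) • D)) x :=
    (hD.cos).mul (hasFDerivAt_rr x hs)
  have hsin : HasFDerivAt (fun y => Real.sin (φ y) * rr y)
      (Real.sin (φ x) • LR x + rr x • (Real.cos (φ x) • D)) x :=
    (hD.sin).mul (hasFDerivAt_rr x hs)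
  have h0 := (ContinuousLinearMap.proj 0 (R := ℝ) (φ := fun _ : Fin 3 => ℝ)).hasFDerivAt (x := x)
  have h1 := (ContinuousLinearMap.proj 1 (R := ℝ) (φ := fun _ : Fin 3 => ℝ)).hasFDerivAt (x := x)
  have e0 : (fun y => Real.cos (φ y) * rr y) =ᶠ[nhds x] fun y : V3 => y 0 :=
    Filter.eventuallyEq_of_mem (hU.mem_nhds hx) (fun y hy => (hbranch y hy).1)
  have e1 : (fun y => Real.sin (φ y) * rr y) =ᶠ[nhds x] fun y : V3 => y 1 :=
    Filter.eventuallyEq_of_mem (hU.mem_nhds hx) (fun y hy => (hbranch y hy).2)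
  have hc' : HasFDerivAt (fun y : V3 => y 0)
      (Real.cos (φ x) • LR x + rr x • ((-Real.sin (φ x)) • D)) x := hcos.congr_of_eventuallyEq e0.symm
  have hs' : HasFDerivAt (fun y : V3 => y 1)
      (Real.sin (φ x) • LR x + rr x • (Real.cos (φ x) • D)) x := hsin.congr_of_eventuallyEq e1.symm
  have hCeq := hc'.unique h0
  have hSeq := hs'.unique h1
  have eq1 : a * LR x v + rr x * (-b * D v) = v 0 := by
    have := congrArg (fun L : V3 →L[ℝ] ℝ => L v) hCeq
    simpa [ContinuousLinearMap.proj_apply] using this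
  have eq2 : b * LR x v + rr x * (a * D v) = v 1 := by
    have := congrArg (fun L : V3 →L[ℝ] ℝ => L v) hSeq
    simpa [ContinuousLinearMap.proj_apply] using this
  have hpyth : a ^ 2 + b ^ 2 = 1 := by
    have := Real.sin_sq_add_cos_sq (φ x); simp only [a, b]; linarith
  have ha : a * rr x = x 0 := (hbranch x hx).1
  have hb : b * rr x = x 1 := (hbranch x hx).2
  have key : rr x * ((a ^ 2 + b ^ 2) * D v) = a * v 1 - b * v 0 := by
    linear_combination a * eq2 - b * eq1
  rw [hpyth, one_mul] at key
  have hsne : rr x ≠ 0 := ne_of_gt hs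
  field_simp
  linear_combination rr x * key + v 1 * ha - v 0 * hb

lemma psi_deriv (U : Set V3) (hU : IsOpen U) (hax : ∀ x ∈ U, 0 < rr x)
    (φ : V3 → ℝ) (hφ : ContDiffOn ℝ (⊤ : ℕ∞) φ U)
    (hbranch : ∀ x ∈ U, Real.cos (φ x) * rr x = x 0 ∧ Real.sin (φ x) * rr x = x 1)
    (x : V3) (hx : x ∈ U) :
    ∃ L : V3 →L[ℝ] ℝ, HasFDerivAt (fun y : V3 => y 2 / rr y - φ y) L x ∧
      ∀ v : V3, L v = v 2 / rr x - x 2 * (x 0 * v 0 + x 1 * v 1) / rr x ^ 3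
        - (x 0 * v 1 - x 1 * v 0) / rr x ^ 2 := by
  have hs : 0 < rr x := hax x hx
  have hsne : rr x ≠ 0 := ne_of_gt hs
  obtain ⟨hDφ, hDφval⟩ := phi_deriv U hU hax φ hφ hbranch x hx
  have hrx := hasFDerivAt_rr x hs
  have hinv : HasFDerivAt (fun y => (rr y)⁻¹) ((-(rr x ^ 2)⁻¹) • LR x) x :=
    (hasDerivAt_inv hsne).comp_hasFDerivAt x hrx
  have h2 := (ContinuousLinearMap.proj 2 (R := ℝ) (φ := fun _ : Fin 3 => ℝ)).hasFDerivAt (x := x)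
  have hmul : HasFDerivAt (fun y : V3 => y 2 * (rr y)⁻¹)
      (x 2 • ((-(rr x ^ 2)⁻¹) • LR x) + (rr x)⁻¹ • (ContinuousLinearMap.proj 2 : V3 →L[ℝ] ℝ)) x :=
    h2.mul hinv
  have heq : (fun y : V3 => y 2 / rr y - φ y) = fun y : V3 => y 2 * (rr y)⁻¹ - φ y := by
    funext y; rw [div_eq_mul_inv]
  refine ⟨_, heq ▸ (show HasFDerivAt (fun y : V3 => y 2 * (rr y)⁻¹ - φ y) _ x from hmul.sub hDφ), fun v => ?_⟩
  simp only [ContinuousLinearMap.sub_apply, ContinuousLinearMap.add_apply,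
    ContinuousLinearMap.smul_apply, ContinuousLinearMap.proj_apply, smul_eq_mul,
    LR_apply, hDφval]
  field_simp
  ring

lemma F_deriv (f : ℝ → ℝ → ℝ) (hf : ContDiff ℝ (⊤ : ℕ∞) (fun p : ℝ × ℝ => f p.1 p.2))
    (g : V3 → ℝ) (x : V3) (Lg : V3 →L[ℝ] ℝ) (hg : HasFDerivAt g Lg x)
    (hrx : HasFDerivAt rr (LR x) x) :
    ∃ (fa fb : ℝ) (L : V3 →L[ℝ] ℝ), HasFDerivAt (fun y => f (rr y) (g y)) L x ∧
      ∀ v : V3, L v = fa * LR x v + fb * Lg v := by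
  set p : ℝ × ℝ := (rr x, g x)
  have hfd : HasFDerivAt (fun q : ℝ × ℝ => f q.1 q.2) (fderiv ℝ (fun q : ℝ × ℝ => f q.1 q.2) p) p :=
    ((hf.differentiable (by simp)) p).hasFDerivAt
  set Df := fderiv ℝ (fun q : ℝ × ℝ => f q.1 q.2) p
  have hprod : HasFDerivAt (fun y => (rr y, g y)) ((LR x).prod Lg) x := HasFDerivAt.prodMk hrx hg
  have hcomp := hfd.comp x hprod
  refine ⟨Df (1, 0), Df (0, 1), _, hcomp, fun v => ?_⟩
  simp only [ContinuousLinearMap.comp_apply, ContinuousLinearMap.prod_apply]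
  have : (LR x v, Lg v) = LR x v • ((1:ℝ), (0:ℝ)) + Lg v • ((0:ℝ), (1:ℝ)) := by
    simp [Prod.ext_iff]
  rw [this, _root_.map_add, _root_.map_smul, _root_.map_smul, smul_eq_mul, smul_eq_mul]
  ring

lemma sg00 : (Pi.single (0:Fin 3) (1:ℝ) : V3) 0 = 1 := Pi.single_eq_same 0 1
lemma sg01 : (Pi.single (0:Fin 3) (1:ℝ) : V3) 1 = 0 := Pi.single_eq_of_ne (by decide) 1
lemma sg02 : (Pi.single (0:Fin 3) (1:ℝ) : V3) 2 = 0 := Pi.single_eq_of_ne (by decide) 1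
lemma sg10 : (Pi.single (1:Fin 3) (1:ℝ) : V3) 0 = 0 := Pi.single_eq_of_ne (by decide) 1
lemma sg11 : (Pi.single (1:Fin 3) (1:ℝ) : V3) 1 = 1 := Pi.single_eq_same 1 1
lemma sg12 : (Pi.single (1:Fin 3) (1:ℝ) : V3) 2 = 0 := Pi.single_eq_of_ne (by decide) 1
lemma sg20 : (Pi.single (2:Fin 3) (1:ℝ) : V3) 0 = 0 := Pi.single_eq_of_ne (by decide) 1
lemma sg21 : (Pi.single (2:Fin 3) (1:ℝ) : V3) 1 = 0 := Pi.single_eq_of_ne (by decide) 1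
lemma sg22 : (Pi.single (2:Fin 3) (1:ℝ) : V3) 2 = 1 := Pi.single_eq_same 2 1

lemma pd_eq {g : V3 → ℝ} {L : V3 →L[ℝ] ℝ} {x : V3} (h : HasFDerivAt g L x) (i : Fin 3) :
    pd i g x = L (Pi.single i 1) := by rw [pd, h.fderiv]

lemma pd_congr {g₁ g₂ : V3 → ℝ} {x : V3} (h : g₁ =ᶠ[nhds x] g₂) (i : Fin 3) :
    pd i g₁ x = pd i g₂ x := by rw [pd, pd, h.fderiv_eq]


set_option maxHeartbeats 2000000 in
/-- With ψ = z/r − φ in cylindrical coordinates (φ a smooth single-valued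
branch of the azimuthal angle on U, off the z-axis), the field B = f(r,ψ)∇r×∇ψ is
divergence-free and self-quasisymmetric: B·∇|B|² = 0. -/
theorem stmt_4 (f : ℝ → ℝ → ℝ) (hf : ContDiff ℝ (⊤ : ℕ∞) (fun p : ℝ × ℝ => f p.1 p.2))
    (U : Set V3) (hU : IsOpen U) (hax : ∀ x ∈ U, 0 < rr x)
    (φ : V3 → ℝ) (hφ : ContDiffOn ℝ (⊤ : ℕ∞) φ U)
    (hbranch : ∀ x ∈ U, Real.cos (φ x) * rr x = x 0 ∧ Real.sin (φ x) * rr x = x 1) :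
    let ψ : V3 → ℝ := fun y => y 2 / rr y - φ y
    let B : V3 → V3 := fun y => fun j => f (rr y) (ψ y) * cross (grad rr y) (grad ψ y) j
    ∀ x ∈ U, div3 B x = 0 ∧ dot (B x) (grad (fun y => dot (B y) (B y)) x) = 0 := by
  intro ψ B x hx
  -- basic facts at any point of U
  have hgrr : ∀ y ∈ U, ∀ i, grad rr y i = (y 0 * (Pi.single i 1 : V3) 0 + y 1 * (Pi.single i 1 : V3) 1) / rr y := by
    intro y hy i
    rw [grad, pd_eq (hasFDerivAt_rr y (hax y hy)), LR_apply]
  have hgψ : ∀ y ∈ U, ∀ i, grad ψ y i =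
      (Pi.single i 1 : V3) 2 / rr y - y 2 * (y 0 * (Pi.single i 1 : V3) 0 + y 1 * (Pi.single i 1 : V3) 1) / rr y ^ 3
        - (y 0 * (Pi.single i 1 : V3) 1 - y 1 * (Pi.single i 1 : V3) 0) / rr y ^ 2 := by
    intro y hy i
    obtain ⟨L, hL, hLval⟩ := psi_deriv U hU hax φ hφ hbranch y hy
    rw [grad, pd_eq hL, hLval]
  have hB3 : ∀ y ∈ U,
      B y 0 = f (rr y) (y 2 / rr y - φ y) * (y 1 / rr y ^ 2) ∧
      B y 1 = f (rr y) (y 2 / rr y - φ y) * (-(y 0) / rr y ^ 2) ∧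
      B y 2 = f (rr y) (y 2 / rr y - φ y) * (-(1 / rr y)) := by
    intro y hy
    have hs : 0 < rr y := hax y hy
    have hs2 := rr_sq y
    have h0 := hgrr y hy
    have h1 := hgψ y hy
    refine ⟨?_, ?_, ?_⟩
    · show f (rr y) (ψ y) * cross (grad rr y) (grad ψ y) 0 = _
      have hψy : ψ y = y 2 / rr y - φ y := rfl
      rw [hψy]
      set Fy := f (rr y) (y 2 / rr y - φ y) with hFy
      simp only [cross, Matrix.cons_val_zero, Matrix.cons_val_one, Matrix.head_cons,
        Matrix.cons_val_two, Matrix.tail_cons]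
      simp only [h0, h1]
      simp only [sg00, sg01, sg02, sg10, sg11, sg12, sg20, sg21, sg22]
      ring_nf
    · show f (rr y) (ψ y) * cross (grad rr y) (grad ψ y) 1 = _
      have hψy : ψ y = y 2 / rr y - φ y := rfl
      rw [hψy]
      set Fy := f (rr y) (y 2 / rr y - φ y) with hFy
      simp only [cross, Matrix.cons_val_zero, Matrix.cons_val_one, Matrix.head_cons,
        Matrix.cons_val_two, Matrix.tail_cons]
      simp only [h0, h1]
      simp only [sg00, sg01, sg02, sg10, sg11, sg12, sg20, sg21, sg22]
      ring_nf
    · show f (rr y) (ψ y) * cross (grad rr y) (grad ψ y) 2 = _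
      have hψy : ψ y = y 2 / rr y - φ y := rfl
      rw [hψy]
      set Fy := f (rr y) (y 2 / rr y - φ y) with hFy
      simp only [cross, Matrix.cons_val_zero, Matrix.cons_val_one, Matrix.head_cons,
        Matrix.cons_val_two, Matrix.tail_cons]
      simp only [h0, h1]
      simp only [sg00, sg01, sg02, sg10, sg11, sg12, sg20, sg21, sg22]
      have hsne : rr y ≠ 0 := ne_of_gt hs
      field_simp
      linear_combination rr y * Fy * hs2
  have hs : 0 < rr x := hax x hx
  have hsne : rr x ≠ 0 := ne_of_gt hs
  have hs2 := rr_sq x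
  have hrx := hasFDerivAt_rr x hs
  obtain ⟨Lψ, hψx, hψval⟩ := psi_deriv U hU hax φ hφ hbranch x hx
  obtain ⟨fa, fb, LF, hFx, hFval⟩ :=
    F_deriv f hf (fun y : V3 => y 2 / rr y - φ y) x Lψ hψx hrx
  have h0p := (ContinuousLinearMap.proj 0 (R := ℝ) (φ := fun _ : Fin 3 => ℝ)).hasFDerivAt (x := x)
  have h1p := (ContinuousLinearMap.proj 1 (R := ℝ) (φ := fun _ : Fin 3 => ℝ)).hasFDerivAt (x := x)
  have hq2 : HasFDerivAt (fun y => rr y ^ 2) (rr x • LR x + rr x • LR x) x := by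
    have h := hrx.mul hrx
    have he : (fun y => rr y ^ 2) = fun y => rr y * rr y := by funext y; ring
    rw [he]; exact h
  have hq2ne : rr x ^ 2 ≠ 0 := pow_ne_zero _ hsne
  have hinv2 : HasFDerivAt (fun y => (rr y ^ 2)⁻¹)
      ((-((rr x ^ 2) ^ 2)⁻¹) • (rr x • LR x + rr x • LR x)) x :=
    (hasDerivAt_inv hq2ne).comp_hasFDerivAt x hq2
  have hinv1 : HasFDerivAt (fun y => (rr y)⁻¹) ((-(rr x ^ 2)⁻¹) • LR x) x :=
    (hasDerivAt_inv hsne).comp_hasFDerivAt x hrx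
  have hw0 : HasFDerivAt (fun y : V3 => y 1 / rr y ^ 2)
      (x 1 • ((-((rr x ^ 2) ^ 2)⁻¹) • (rr x • LR x + rr x • LR x))
        + (rr x ^ 2)⁻¹ • (ContinuousLinearMap.proj 1 : V3 →L[ℝ] ℝ)) x := by
    have h := h1p.mul hinv2
    have he : (fun y : V3 => y 1 / rr y ^ 2) = fun y : V3 => y 1 * (rr y ^ 2)⁻¹ := by
      funext y; rw [div_eq_mul_inv]
    rw [he]; exact h
  have hw1 : HasFDerivAt (fun y : V3 => -(y 0) / rr y ^ 2)
      ((-(x 0)) • ((-((rr x ^ 2) ^ 2)⁻¹) • (rr x • LR x + rr x • LR x))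
        + (rr x ^ 2)⁻¹ • (-(ContinuousLinearMap.proj 0 : V3 →L[ℝ] ℝ))) x := by
    have h := h0p.neg.mul hinv2
    have he : (fun y : V3 => -(y 0) / rr y ^ 2) = fun y : V3 => -(y 0) * (rr y ^ 2)⁻¹ := by
      funext y; rw [div_eq_mul_inv]
    rw [he]; exact h
  have hw2 : HasFDerivAt (fun y : V3 => -(1 / rr y)) (-((-(rr x ^ 2)⁻¹) • LR x)) x := by
    have h := hinv1.neg
    have he : (fun y : V3 => -(1 / rr y)) = fun y : V3 => -((rr y)⁻¹) := by
      funext y; rw [one_div]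
    rw [he]; exact h
  set Fx : ℝ := f (rr x) (x 2 / rr x - φ x) with hFxdef
  -- pd values of the three components of B
  have p0 : pd 0 (fun y => f (rr y) (y 2 / rr y - φ y) * (y 1 / rr y ^ 2)) x
      = (Fx • (x 1 • ((-((rr x ^ 2) ^ 2)⁻¹) • (rr x • LR x + rr x • LR x))
        + (rr x ^ 2)⁻¹ • (ContinuousLinearMap.proj 1 : V3 →L[ℝ] ℝ))
        + (x 1 / rr x ^ 2) • LF) (Pi.single 0 1) := pd_eq (hFx.mul hw0) 0
  have p1 : pd 1 (fun y => f (rr y) (y 2 / rr y - φ y) * (-(y 0) / rr y ^ 2)) x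
      = (Fx • ((-(x 0)) • ((-((rr x ^ 2) ^ 2)⁻¹) • (rr x • LR x + rr x • LR x))
        + (rr x ^ 2)⁻¹ • (-(ContinuousLinearMap.proj 0 : V3 →L[ℝ] ℝ)))
        + (-(x 0) / rr x ^ 2) • LF) (Pi.single 1 1) := pd_eq (hFx.mul hw1) 1
  have p2 : pd 2 (fun y => f (rr y) (y 2 / rr y - φ y) * (-(1 / rr y))) x
      = (Fx • (-((-(rr x ^ 2)⁻¹) • LR x))
        + (-(1 / rr x)) • LF) (Pi.single 2 1) := pd_eq (hFx.mul hw2) 2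
  constructor
  · rw [div3, Fin.sum_univ_three]
    have e0 : (fun y => B y 0) =ᶠ[nhds x] fun y => f (rr y) (y 2 / rr y - φ y) * (y 1 / rr y ^ 2) :=
      Filter.eventuallyEq_of_mem (hU.mem_nhds hx) (fun y hy => (hB3 y hy).1)
    have e1 : (fun y => B y 1) =ᶠ[nhds x] fun y => f (rr y) (y 2 / rr y - φ y) * (-(y 0) / rr y ^ 2) :=
      Filter.eventuallyEq_of_mem (hU.mem_nhds hx) (fun y hy => (hB3 y hy).2.1)
    have e2 : (fun y => B y 2) =ᶠ[nhds x] fun y => f (rr y) (y 2 / rr y - φ y) * (-(1 / rr y)) :=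
      Filter.eventuallyEq_of_mem (hU.mem_nhds hx) (fun y hy => (hB3 y hy).2.2)
    rw [pd_congr e0 0, pd_congr e1 1, pd_congr e2 2, p0, p1, p2]
    simp only [ContinuousLinearMap.add_apply, ContinuousLinearMap.smul_apply,
      ContinuousLinearMap.neg_apply, ContinuousLinearMap.proj_apply, smul_eq_mul,
      hFval, hψval, LR_apply, sg00, sg01, sg02, sg10, sg11, sg12, sg20, sg21, sg22]
    field_simp
    linear_combination (-(fb * rr x)) * hs2
  · have hdBB : ∀ y ∈ U, dot (B y) (B y)
        = 2 * (f (rr y) (y 2 / rr y - φ y) * f (rr y) (y 2 / rr y - φ y)) * (rr y ^ 2)⁻¹ := by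
      intro y hy
      obtain ⟨b0, b1, b2⟩ := hB3 y hy
      rw [dot, Fin.sum_univ_three, b0, b1, b2]
      have hsy : rr y ≠ 0 := ne_of_gt (hax y hy)
      have hs2y := rr_sq y
      set Fy := f (rr y) (y 2 / rr y - φ y) with hFy
      field_simp
      linear_combination (-(Fy ^ 2)) * hs2y
    have eBB : (fun y => dot (B y) (B y)) =ᶠ[nhds x]
        fun y => 2 * (f (rr y) (y 2 / rr y - φ y) * f (rr y) (y 2 / rr y - φ y)) * (rr y ^ 2)⁻¹ :=
      Filter.eventuallyEq_of_mem (hU.mem_nhds hx) (fun y hy => hdBB y hy)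
    have hhex : HasFDerivAt
        (fun y => 2 * (f (rr y) (y 2 / rr y - φ y) * f (rr y) (y 2 / rr y - φ y)) * (rr y ^ 2)⁻¹)
        ((2 * (Fx * Fx)) • ((-((rr x ^ 2) ^ 2)⁻¹) • (rr x • LR x + rr x • LR x))
          + (rr x ^ 2)⁻¹ • ((2:ℝ) • (Fx • LF + Fx • LF))) x :=
      ((hFx.mul hFx).const_mul 2).mul hinv2
    have q : ∀ i : Fin 3, grad (fun y => dot (B y) (B y)) x i
        = ((2 * (Fx * Fx)) • ((-((rr x ^ 2) ^ 2)⁻¹) • (rr x • LR x + rr x • LR x))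
          + (rr x ^ 2)⁻¹ • ((2:ℝ) • (Fx • LF + Fx • LF))) (Pi.single i 1) := by
      intro i
      rw [grad, pd_congr eBB i, pd_eq hhex i]
    obtain ⟨b0, b1, b2⟩ := hB3 x hx
    rw [dot, Fin.sum_univ_three, q 0, q 1, q 2, b0, b1, b2]
    simp only [ContinuousLinearMap.add_apply, ContinuousLinearMap.smul_apply,
      ContinuousLinearMap.neg_apply, ContinuousLinearMap.proj_apply, smul_eq_mul,
      hFval, hψval, LR_apply, sg00, sg01, sg02, sg10, sg11, sg12, sg20, sg21, sg22]
    rw [← hFxdef]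
    field_simp
    linear_combination (-(4 * Fx ^ 2 * fb * rr x)) * hs2
end
end

section
/- If a smooth vector field B on ℝ³ is invariant under the flow of an Euclidean isometry generator u = a + b×x (i.e. the Lie derivative 𝔏_u B = 0), then u·∇|B|² = 0, ∇·u = 0, and 𝔏_u(dV) = 0; in other words, every symmetric magnetic field is quasisymmetric with respect to the corresponding isometry. -/
open MeasureTheory

noncomputable section

/-- Lie derivative of a vector field B along u: 𝔏_u B = (u·∇)B − (B·∇)u. -/
noncomputable def lie (u B : V3 → V3) (x : V3) : V3 :=
  fun j => dot (u x) (grad (fun y => B y j) x) - dot (B x) (grad (fun y => u y j) x)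

lemma pd_lin (c p q : ℝ) (m n : Fin 3) (x : V3) (i : Fin 3) :
    pd i (fun y => c + (p * y m - q * y n)) x
      = p * (Pi.single i 1 : V3) m - q * (Pi.single i 1 : V3) n := by
  have hm : HasFDerivAt (fun y : V3 => y m)
      (ContinuousLinearMap.proj (R := ℝ) (φ := fun _ : Fin 3 => ℝ) m) x :=
    (ContinuousLinearMap.proj (R := ℝ) (φ := fun _ : Fin 3 => ℝ) m).hasFDerivAt
  have hn : HasFDerivAt (fun y : V3 => y n)
      (ContinuousLinearMap.proj (R := ℝ) (φ := fun _ : Fin 3 => ℝ) n) x :=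
    (ContinuousLinearMap.proj (R := ℝ) (φ := fun _ : Fin 3 => ℝ) n).hasFDerivAt
  have H := ((hm.const_mul p).sub (hn.const_mul q)).const_add c
  unfold pd
  rw [(show HasFDerivAt (fun y : V3 => c + (p * y m - q * y n)) _ x from H).fderiv]
  simp

lemma pd_u (a b : V3) (u : V3 → V3) (hu : ∀ x, ∀ j, u x j = a j + cross b x j)
    (i j : Fin 3) (x : V3) : pd i (fun y => u y j) x = cross b (Pi.single i 1) j := by
  have h : (fun y => u y j) = fun y => a j + cross b y j := funext fun y => hu y j
  rw [h]
  fin_cases j <;>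
    simp only [cross, Matrix.cons_val_zero, Matrix.cons_val_one, Matrix.head_cons,
      Matrix.cons_val_two, Matrix.tail_cons, Fin.isValue] <;>
    exact pd_lin _ _ _ _ _ _ _

lemma pd_dotBB (B : V3 → V3) (hB : ContDiff ℝ (⊤ : ℕ∞) B) (i : Fin 3) (x : V3) :
    pd i (fun y => dot (B y) (B y)) x = 2 * ∑ j, B x j * pd i (fun y => B y j) x := by
  have hd : ∀ j, DifferentiableAt ℝ (fun y => B y j) x := fun j =>
    (differentiableAt_pi.mp ((hB.differentiable (by simp)) x)) j
  have h : (fun y => dot (B y) (B y)) = fun y => ∑ j, B y j * B y j := by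
    funext y; rfl
  rw [h]
  unfold pd
  rw [fderiv_fun_sum (A := fun j y => B y j * B y j) (fun j _ => (hd j).mul (hd j)), ContinuousLinearMap.sum_apply,
    Finset.mul_sum]
  refine Finset.sum_congr rfl fun j _ => ?_
  rw [fderiv_fun_mul (hd j) (hd j)]
  simp only [ContinuousLinearMap.add_apply, ContinuousLinearMap.smul_apply, smul_eq_mul]
  ring

/-- If a smooth B is Lie-invariant along the Euclidean isometry generator
u = a + b×x, then u·∇|B|² = 0, ∇·u = 0 (and hence 𝔏_u dV = 0): every symmetric field
is quasisymmetric. -/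
theorem stmt_8 (a b : V3) (B : V3 → V3) (hB : ContDiff ℝ (⊤ : ℕ∞) B)
    (u : V3 → V3) (hu : ∀ x, ∀ j, u x j = a j + cross b x j)
    (hlie : ∀ x, lie u B x = 0) :
    ∀ x, dot (u x) (grad (fun y => dot (B y) (B y)) x) = 0 ∧ div3 u x = 0 := by
  intro x
  constructor
  · have hl : ∀ j : Fin 3, ∑ i, u x i * pd i (fun y => B y j) x
        = ∑ i, B x i * cross b (Pi.single i 1) j := by
      intro j
      have h0 := congrFun (hlie x) j
      simp only [lie, Pi.zero_apply, sub_eq_zero] at h0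
      have h1 : dot (u x) (grad (fun y => B y j) x)
          = ∑ i, u x i * pd i (fun y => B y j) x := rfl
      have h2 : dot (B x) (grad (fun y => u y j) x)
          = ∑ i, B x i * pd i (fun y => u y j) x := rfl
      rw [h1, h2] at h0
      rw [h0]
      exact Finset.sum_congr rfl fun i _ => by rw [pd_u a b u hu i j x]
    have key : ∀ i, pd i (fun y => dot (B y) (B y)) x
        = 2 * ∑ j, B x j * pd i (fun y => B y j) x := fun i => pd_dotBB B hB i x
    show ∑ i, u x i * pd i (fun y => dot (B y) (B y)) x = 0
    simp only [key]
    have h0 := hl 0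
    have h1 := hl 1
    have h2 := hl 2
    simp only [Fin.sum_univ_three, cross, Matrix.cons_val_zero, Matrix.cons_val_one,
      Matrix.head_cons, Matrix.cons_val_two, Matrix.tail_cons, Pi.single_apply,
      Fin.isValue, Fin.reduceEq, if_true, if_false] at h0 h1 h2 ⊢
    norm_num at h0 h1 h2
    linear_combination 2 * B x 0 * h0 + 2 * B x 1 * h1 + 2 * B x 2 * h2
  · show ∑ i, pd i (fun y => u y i) x = 0
    simp only [fun i => pd_u a b u hu i i x]
    simp [Fin.sum_univ_three, cross, Pi.single_apply]
end
end

section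
/- Let (μ, ν, z) be coordinates on an open set U ⊂ ℝ³ satisfying ∇μ·∇ν = ∇μ·∇z = ∇ν·∇z = 0, |∇μ| = |∇ν|, |∇z| = 1, Δμ = Δν = 0, with |∇μ| independent of z. Then for any smooth function λ = λ(μ), the vector field B = λ(μ)∇ν satisfies: ∇·B = 0; B × ∇z = ∇ζ where ζ is a primitive of λ with respect to μ (so the quasisymmetry condition B × u = ∇ζ holds with u = ∇z); and ∂|B|²/∂z = 0 (i.e. u·∇|B|² = 0). Hence B is a translationally symmetric solution of the quasisymmetry equations. -/
open MeasureTheory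

noncomputable section

/-- Product rule for partial derivatives. -/
lemma pd_mul (i : Fin 3) (f g : V3 → ℝ) (x : V3) (hf : DifferentiableAt ℝ f x)
    (hg : DifferentiableAt ℝ g x) :
    pd i (fun y => f y * g y) x = pd i f x * g x + f x * pd i g x := by
  unfold pd
  rw [fderiv_fun_mul hf hg]
  simp only [ContinuousLinearMap.add_apply, ContinuousLinearMap.smul_apply, smul_eq_mul]
  ring

/-- Chain rule for partial derivatives. -/
lemma pd_comp (i : Fin 3) (h : ℝ → ℝ) (c : ℝ) (f : V3 → ℝ) (x : V3)
    (hh : HasDerivAt h c (f x)) (hf : DifferentiableAt ℝ f x) :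
    pd i (fun y => h (f y)) x = c * pd i f x := by
  unfold pd
  have H : HasFDerivAt (fun y => h (f y)) (c • fderiv ℝ f x) x :=
    hh.comp_hasFDerivAt x hf.hasFDerivAt
  rw [H.fderiv]
  simp

lemma dot_expand (a b : V3) : dot a b = a 0 * b 0 + a 1 * b 1 + a 2 * b 2 :=
  Fin.sum_univ_three _

/-- In orthogonal harmonic coordinates (μ, ν, z) with |∇μ| = |∇ν|,
|∇z| = 1, Δμ = Δν = 0, |∇ν| independent of z, and ∇ν×∇z = ∇μ, the field B = λ(μ)∇ν
is divergence-free, satisfies B×∇z = ∇(ζ∘μ) with ζ′ = λ, and has ∂|B|²/∂z = 0: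
a translationally symmetric solution of the quasisymmetry equations with u = ∇z. -/
theorem stmt_11 (U : Set V3) (hU : IsOpen U) (μ ν zc : V3 → ℝ)
    (hμ : ContDiffOn ℝ (⊤ : ℕ∞) μ U) (hν : ContDiffOn ℝ (⊤ : ℕ∞) ν U) (hz : ContDiffOn ℝ (⊤ : ℕ∞) zc U)
    (h12 : ∀ x ∈ U, dot (grad μ x) (grad ν x) = 0)
    (h13 : ∀ x ∈ U, dot (grad μ x) (grad zc x) = 0)
    (h23 : ∀ x ∈ U, dot (grad ν x) (grad zc x) = 0)
    (heq : ∀ x ∈ U, dot (grad μ x) (grad μ x) = dot (grad ν x) (grad ν x))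
    (hzn : ∀ x ∈ U, dot (grad zc x) (grad zc x) = 1)
    (hlapμ : ∀ x ∈ U, (∑ i, pd i (fun y => pd i μ y) x) = 0)
    (hlapν : ∀ x ∈ U, (∑ i, pd i (fun y => pd i ν y) x) = 0)
    (hzinv : ∀ x ∈ U, dot (grad zc x) (grad (fun y => dot (grad ν y) (grad ν y)) x) = 0)
    (horient : ∀ x ∈ U, ∀ j, cross (grad ν x) (grad zc x) j = grad μ x j)
    (lam ζ : ℝ → ℝ) (hlam : ContDiff ℝ (⊤ : ℕ∞) lam) (hζ : ∀ t, HasDerivAt ζ (lam t) t) :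
    let B : V3 → V3 := fun y => fun j => lam (μ y) * grad ν y j
    ∀ x ∈ U, div3 B x = 0
      ∧ (∀ j, cross (B x) (grad zc x) j = grad (fun y => ζ (μ y)) x j)
      ∧ dot (grad zc x) (grad (fun y => dot (B y) (B y)) x) = 0 := by
  intro B x hx
  have hB : ∀ (y : V3) (j : Fin 3), B y j = lam (μ y) * pd j ν y := fun _ _ => rfl
  have hxn : U ∈ nhds x := hU.mem_nhds hx
  have hμd : DifferentiableAt ℝ μ x := (hμ.contDiffAt hxn).differentiableAt (by simp)
  have hνpdd : ∀ i, DifferentiableAt ℝ (fun y => pd i ν y) x := by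
    intro i
    have h : ContDiffOn ℝ (⊤ : ℕ∞) (fun y => pd i ν y) U := by
      unfold pd
      exact (hν.fderiv_of_isOpen hU (by simp)).clm_apply contDiffOn_const
    exact (h.contDiffAt hxn).differentiableAt (by simp)
  have hLd : DifferentiableAt ℝ (fun y => lam (μ y)) x :=
    ((hlam.differentiable (by simp)) (μ x)).comp x hμd
  have hlam' : HasDerivAt lam (deriv lam (μ x)) (μ x) :=
    ((hlam.differentiable (by simp)) (μ x)).hasDerivAt
  have hGd : DifferentiableAt ℝ (fun y => dot (grad ν y) (grad ν y)) x := by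
    have he : (fun y => dot (grad ν y) (grad ν y))
        = fun y => pd 0 ν y * pd 0 ν y + pd 1 ν y * pd 1 ν y + pd 2 ν y * pd 2 ν y := by
      funext y; rw [dot_expand]; rfl
    rw [he]
    exact (((hνpdd 0).mul (hνpdd 0)).add ((hνpdd 1).mul (hνpdd 1))).add
      ((hνpdd 2).mul (hνpdd 2))
  refine ⟨?_, ?_, ?_⟩
  · -- divergence free
    have hd : ∀ i, pd i (fun y => lam (μ y) * pd i ν y) x
        = deriv lam (μ x) * pd i μ x * pd i ν x + lam (μ x) * pd i (fun y => pd i ν y) x := by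
      intro i
      rw [pd_mul i (fun y => lam (μ y)) (fun y => pd i ν y) x hLd (hνpdd i),
        pd_comp i lam (deriv lam (μ x)) μ x hlam' hμd]
    have h12' : pd 0 μ x * pd 0 ν x + pd 1 μ x * pd 1 ν x + pd 2 μ x * pd 2 ν x = 0 := by
      have h := h12 x hx
      rw [dot_expand] at h
      exact h
    have hlap : pd 0 (fun y => pd 0 ν y) x + pd 1 (fun y => pd 1 ν y) x
        + pd 2 (fun y => pd 2 ν y) x = 0 := by
      have h := hlapν x hx
      rw [Fin.sum_univ_three] at h
      exact h
    show (∑ i, pd i (fun y => B y i) x) = 0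
    simp only [hB]
    rw [Fin.sum_univ_three, hd 0, hd 1, hd 2]
    linear_combination deriv lam (μ x) * h12' + lam (μ x) * hlap
  · -- B × ∇z = ∇(ζ ∘ μ)
    have hζd : ∀ j, grad (fun y => ζ (μ y)) x j = lam (μ x) * pd j μ x := by
      intro j
      show pd j (fun y => ζ (μ y)) x = lam (μ x) * pd j μ x
      exact pd_comp j ζ (lam (μ x)) μ x (hζ (μ x)) hμd
    have hcross : ∀ j, cross (B x) (grad zc x) j
        = lam (μ x) * cross (grad ν x) (grad zc x) j := by
      intro j
      fin_cases j <;> simp [cross, hB, grad] <;> ring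
    intro j
    rw [hcross j, horient x hx j, hζd j]
    rfl
  · -- ∂|B|²/∂z = 0
    have hFeq : (fun y => dot (B y) (B y))
        = fun y => lam (μ y) * lam (μ y) * dot (grad ν y) (grad ν y) := by
      funext y
      rw [dot_expand, dot_expand]
      simp only [hB]
      show _ = _ * _ * (pd 0 ν y * pd 0 ν y + pd 1 ν y * pd 1 ν y + pd 2 ν y * pd 2 ν y)
      ring
    have hLLd : DifferentiableAt ℝ (fun y => lam (μ y) * lam (μ y)) x := hLd.mul hLd
    have hpdF : ∀ j, pd j (fun y => lam (μ y) * lam (μ y) * dot (grad ν y) (grad ν y)) x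
        = 2 * lam (μ x) * deriv lam (μ x) * pd j μ x * dot (grad ν x) (grad ν x)
          + lam (μ x) * lam (μ x) * pd j (fun y => dot (grad ν y) (grad ν y)) x := by
      intro j
      rw [pd_mul j (fun y => lam (μ y) * lam (μ y)) (fun y => dot (grad ν y) (grad ν y)) x
          hLLd hGd,
        pd_mul j (fun y => lam (μ y)) (fun y => lam (μ y)) x hLd hLd,
        pd_comp j lam (deriv lam (μ x)) μ x hlam' hμd]
      ring
    have h13' : pd 0 μ x * pd 0 zc x + pd 1 μ x * pd 1 zc x + pd 2 μ x * pd 2 zc x = 0 := by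
      have h := h13 x hx
      rw [dot_expand] at h
      exact h
    have hzi : pd 0 zc x * pd 0 (fun y => dot (grad ν y) (grad ν y)) x
        + pd 1 zc x * pd 1 (fun y => dot (grad ν y) (grad ν y)) x
        + pd 2 zc x * pd 2 (fun y => dot (grad ν y) (grad ν y)) x = 0 := by
      have h := hzinv x hx
      rw [dot_expand] at h
      exact h
    rw [hFeq, dot_expand]
    show pd 0 zc x * pd 0 (fun y => lam (μ y) * lam (μ y) * dot (grad ν y) (grad ν y)) x
       + pd 1 zc x * pd 1 (fun y => lam (μ y) * lam (μ y) * dot (grad ν y) (grad ν y)) x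
       + pd 2 zc x * pd 2 (fun y => lam (μ y) * lam (μ y) * dot (grad ν y) (grad ν y)) x = 0
    rw [hpdF 0, hpdF 1, hpdF 2]
    linear_combination (2 * lam (μ x) * deriv lam (μ x) * dot (grad ν x) (grad ν x)) * h13'
      + (lam (μ x) * lam (μ x)) * hzi
end
end

section
/- Let k ∈ ℝ and α, β : (0,∞) → ℝ be smooth. In cylindrical coordinates define B(r,φ,z) = −sin(z − β(r) − krφ(α(r) − ½rφ))(r∇φ + k(α(r) − rφ)∇z). If B satisfies the periodicity condition B|_{φ=0} = B|_{φ=2π} for all r in an open interval and all z, then k = 0. In other words, the locally constructed quasisymmetric field extends to a single-valued field on the full torus only in the axially symmetric case. -/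
/-- For B(r,φ,z) = −sin(z − β(r) − krφ(α(r) − ½rφ))(r∇φ + k(α(r) − rφ)∇z),
if the ∇φ- and ∇z-components of B agree at φ = 0 and φ = 2π for all r in a nonempty
set of positive radii and all z, then k = 0: the local quasisymmetric field is
single-valued on the torus only in the axially symmetric case. -/
theorem stmt_14 (k : ℝ) (I : Set ℝ) (hI : I.Nonempty) (hIpos : I ⊆ Set.Ioi (0 : ℝ))
    (α β : ℝ → ℝ) (hα : ContDiff ℝ (⊤ : ℕ∞) α) (hβ : ContDiff ℝ (⊤ : ℕ∞) β)
    (hper : ∀ r ∈ I, ∀ z : ℝ,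
      (-Real.sin (z - β r - k * r * 0 * (α r - (1/2) * r * 0)) * r
          = -Real.sin (z - β r - k * r * (2 * Real.pi) * (α r - (1/2) * r * (2 * Real.pi))) * r)
      ∧ (-Real.sin (z - β r - k * r * 0 * (α r - (1/2) * r * 0)) * (k * (α r - r * 0))
          = -Real.sin (z - β r - k * r * (2 * Real.pi) * (α r - (1/2) * r * (2 * Real.pi)))
              * (k * (α r - r * (2 * Real.pi))))) :
    k = 0 := by
  obtain ⟨r, hr⟩ := hI
  have hr0 : (0 : ℝ) < r := hIpos hr
  obtain ⟨h1, h2⟩ := hper r hr (β r + Real.pi / 2)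
  have hs1 : Real.sin (β r + Real.pi / 2 - β r - k * r * 0 * (α r - (1/2) * r * 0)) = 1 := by
    norm_num [Real.sin_pi_div_two]
  rw [hs1] at h1 h2
  have hS : Real.sin (β r + Real.pi / 2 - β r
      - k * r * (2 * Real.pi) * (α r - (1/2) * r * (2 * Real.pi))) = 1 := by
    have := mul_right_cancel₀ hr0.ne' h1
    linarith
  rw [hS] at h2
  have hπ : (0 : ℝ) < Real.pi := Real.pi_pos
  nlinarith [sq_nonneg k, sq_nonneg r, mul_pos hπ hr0]
end
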